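/- In the Witt algebra W over a field of characteristic p ≥ 5, the elements e_{-1} and e_{p-2} generate W as a Lie algebra: the smallest Lie subalgebra of W containing e_{-1} and e_{p-2} is W itself. -/

import Mathlib

open scoped BigOperators

/-- The Witt bracket on coordinates with respect to the basis `e_{-1}, e_0, …, e_{p-2}`,
where the index `i : Fin p` encodes `n = i - 1`:  `[e_m, e_n] = (n - m) e_{m+n}`,
with `e_{m+n} := 0` if `m + n` lies outside `{-1, …, p-2}`. -/
def wittBracket (p : ℕ) (k : Type*) [Field k] (x y : Fin p → k) : Fin p → k :=
  fun i => ∑ a : Fin p, ∑ b : Fin p,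
    if (a : ℤ) + (b : ℤ) = (i : ℤ) + 1 then
      ((((b : ℤ) - (a : ℤ)) : ℤ) : k) * x a * y b
    else 0

/-- The basis vector `e_n` of the Witt algebra (zero if `n ∉ {-1, …, p-2}`). -/
def wittE (p : ℕ) (k : Type*) [Field k] (n : ℤ) : Fin p → k :=
  fun i => if (i : ℤ) = n + 1 then 1 else 0

/-! Bracketing with `e_{-1}` sends `e_n` to `(n + 1) e_{n-1}`, and `n + 1` runs through
`1, …, p - 1`, which are units in characteristic `p`. So starting from `e_{p-2}`, repeated
brackets with `e_{-1}` produce every basis vector `e_{p-3}, …, e_{-1}` up to a nonzero scalar. -/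

section Witt

variable {k : Type*} [Field k]

lemma wittE_eq_single {p : ℕ} {n : ℤ} (i : Fin p) (hi : (i : ℤ) = n + 1) :
    wittE p k n = Pi.single i 1 := by
  funext j
  simp only [wittE, Pi.single_apply, ← hi, Fin.ext_iff, Nat.cast_inj]

lemma wittBracket_single_single {p : ℕ} (a b i : Fin p) :
    wittBracket p k (Pi.single a 1) (Pi.single b 1) i =
      if (a : ℤ) + b = i + 1 then (((b : ℤ) - a : ℤ) : k) else 0 := by
  rw [wittBracket, Finset.sum_eq_single a (fun _ _ h => by simp [h]) (by simp),
    Finset.sum_eq_single b (fun _ _ h => by simp [h]) (by simp)]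
  simp

/-- With `e_m` encoded as `Pi.single (m + 1) 1`, this is `[e_{-1}, e_i] = (i + 1) e_{i-1}`. -/
lemma wittBracket_single_zero_single_succ {n : ℕ} (i : Fin n) :
    wittBracket (n + 1) k (Pi.single 0 1) (Pi.single i.succ 1) =
      ((i + 1 : ℕ) : k) • Pi.single i.castSucc 1 := by
  funext j
  rw [wittBracket_single_single, Pi.smul_apply, Pi.single_apply, smul_eq_mul, mul_ite, mul_one,
    mul_zero]
  refine if_congr ?_ (by simp) rfl
  simp only [Fin.ext_iff, Fin.val_zero, Fin.val_succ, Fin.val_castSucc]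
  omega

variable {n : ℕ} [CharP k (n + 1)] {S : Submodule k (Fin (n + 1) → k)}

lemma single_castSucc_mem_of_single_succ_mem
    (hS : ∀ x y, x ∈ S → y ∈ S → wittBracket (n + 1) k x y ∈ S)
    (h0 : Pi.single 0 1 ∈ S) {i : Fin n} (hi : Pi.single i.succ 1 ∈ S) :
    Pi.single i.castSucc 1 ∈ S := by
  have hcoeff : ((i + 1 : ℕ) : k) ≠ 0 := by
    rw [Ne, CharP.cast_eq_zero_iff k (n + 1)]
    exact Nat.not_dvd_of_pos_of_lt (Nat.succ_pos _) (Nat.succ_lt_succ i.isLt)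
  have := hS _ _ h0 hi
  rwa [wittBracket_single_zero_single_succ, S.smul_mem_iff hcoeff] at this

lemma single_mem_of_single_last_mem
    (hS : ∀ x y, x ∈ S → y ∈ S → wittBracket (n + 1) k x y ∈ S)
    (h0 : Pi.single 0 1 ∈ S) (hlast : Pi.single (Fin.last n) 1 ∈ S) (i : Fin (n + 1)) :
    Pi.single i 1 ∈ S :=
  Fin.reverseInduction hlast (fun _ => single_castSucc_mem_of_single_succ_mem hS h0) i

end Witt

lemma Submodule.eq_top_of_forall_single_mem {R ι : Type*} [Semiring R] [Finite ι] [DecidableEq ι]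
    {S : Submodule R (ι → R)} (h : ∀ i, Pi.single i 1 ∈ S) : S = ⊤ := by
  rw [eq_top_iff, ← (Pi.basisFun R ι).span_eq, Submodule.span_le]
  rintro _ ⟨i, rfl⟩
  simpa using h i

theorem witt_generated_by_two_elements_general (p : ℕ)
    (k : Type*) [Field k] [CharP k p] :
    ∀ S : Submodule k (Fin p → k),
      wittE p k (-1) ∈ S → wittE p k ((p : ℤ) - 2) ∈ S →
      (∀ x y : Fin p → k, x ∈ S → y ∈ S → wittBracket p k x y ∈ S) →
      S = ⊤ := by
  intro S hfirst hlast hS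
  cases p with
  | zero => exact Subsingleton.elim _ _
  | succ n =>
    rw [wittE_eq_single 0 (by simp)] at hfirst
    rw [wittE_eq_single (Fin.last n) (by push_cast; ring)] at hlast
    exact Submodule.eq_top_of_forall_single_mem
      (single_mem_of_single_last_mem hS hfirst hlast)

/-- In the Witt algebra over a field of characteristic `p ≥ 5`, the elements `e₋₁` and
`e_{p-2}` generate `W` as a Lie algebra: every Lie subalgebra (subspace closed under the
bracket) containing them is all of `W`. -/
theorem witt_generated_by_two_elements (p : ℕ) [Fact p.Prime] (hp : 5 ≤ p)
    (k : Type*) [Field k] [CharP k p] :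
    ∀ S : Submodule k (Fin p → k),
      wittE p k (-1) ∈ S → wittE p k ((p : ℤ) - 2) ∈ S →
      (∀ x y : Fin p → k, x ∈ S → y ∈ S → wittBracket p k x y ∈ S) →
      S = ⊤ :=
  witt_generated_by_two_elements_general p k
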